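/- arXiv:1612.04103 — 2 statements merged into one kernel-verified Lean document; each statement's English description precedes it below -/
import Mathlib

section
/- Let ω > 0, let Q ∈ ℕ, and let λ ∈ ℂ satisfy cos(λω) ≠ 0 (equivalently, λ ≠ (k + 1/2)π/ω for every k ∈ ℤ). Let v₀, …, v_Q : ℝ → ℂ be twice continuously differentiable functions, and set v_{Q+1} = v_{Q+2} = 0. Assume that for every 0 ≤ q ≤ Q and every θ ∈ [0, ω], v_q''(θ) + λ²·v_q(θ) + 2λ(q+1)·v_{q+1}(θ) + (q+2)(q+1)·v_{q+2}(θ) = 0, and that v_q(0) = 0 and v_q'(ω) = 0 for every 0 ≤ q ≤ Q. Then v_q vanishes identically on [0, ω] for every 0 ≤ q ≤ Q. -/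
/-!
Each profile solves `u'' + λ² u = F` with `F` built from the two higher profiles, so by
downward induction on `q` it suffices that `u'' + λ² u = 0, u(0) = 0, u'(ω) = 0` forces `u = 0`
when `cos (λ ω) ≠ 0`. For that, rotating the pair `(u', λ u)` by the angle `λ θ` gives two
first integrals. The one vanishing at `0` also vanishes at `ω`, where it equals
`-λ u(ω) cos (λ ω)`; hence `λ u(ω) = 0`, so the other one vanishes at `ω` as well. Both being
zero, so is `u'`, and `u(0) = 0` gives `u = 0`.
-/

open Set Complex

lemma Nat.decreasingInduction_two {P : ℕ → Prop} {n : ℕ}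
    (step : ∀ k < n, P (k + 1) → P (k + 2) → P k) (hn : P n) (hn1 : P (n + 1)) :
    ∀ m ≤ n, P m := fun _ hm =>
  (Nat.decreasingInduction (motive := fun m _ => P m ∧ P (m + 1))
    (fun k hk ⟨h1, h2⟩ => ⟨step k hk h1 h2, h1⟩) ⟨hn, hn1⟩ hm).1

lemma eqOn_Icc_of_hasDerivAt_zero {E : Type*} [NormedAddCommGroup E] [NormedSpace ℝ E]
    {f : ℝ → E} {a b : ℝ} (hf : ∀ x ∈ Icc a b, HasDerivAt f 0 x) :
    ∀ x ∈ Icc a b, f x = f a :=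
  constant_of_has_deriv_right_zero
    (fun x hx => (hf x hx).continuousAt.continuousWithinAt)
    (fun x hx => (hf x (Ico_subset_Icc_self hx)).hasDerivWithinAt)

lemma hasDerivAt_cos_const_mul (l : ℂ) (θ : ℝ) :
    HasDerivAt (fun t : ℝ => cos (l * t)) (-sin (l * θ) * l) θ := by
  simpa using ((hasDerivAt_id (θ : ℂ)).const_mul l).ccos.comp_ofReal

lemma hasDerivAt_sin_const_mul (l : ℂ) (θ : ℝ) :
    HasDerivAt (fun t : ℝ => sin (l * t)) (cos (l * θ) * l) θ := by
  simpa using ((hasDerivAt_id (θ : ℂ)).const_mul l).csin.comp_ofReal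

section Oscillator

variable {l : ℂ} {u : ℝ → ℂ}

/-- The two first integrals of `u'' + l² u = 0`: the pair `(u', l u)` rotated by the angle `l t`. -/
noncomputable def oscCos (l : ℂ) (u : ℝ → ℂ) (t : ℝ) : ℂ :=
  deriv u t * cos (l * t) + l * u t * sin (l * t)

noncomputable def oscSin (l : ℂ) (u : ℝ → ℂ) (t : ℝ) : ℂ :=
  deriv u t * sin (l * t) - l * u t * cos (l * t)

lemma hasDerivAt_oscCos {θ : ℝ} (hu : DifferentiableAt ℝ u θ)
    (hu' : DifferentiableAt ℝ (deriv u) θ) (hode : deriv (deriv u) θ + l ^ 2 * u θ = 0) :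
    HasDerivAt (oscCos l u) 0 θ :=
  (hu'.hasDerivAt.mul (hasDerivAt_cos_const_mul l θ)).add
    ((hu.hasDerivAt.const_mul l).mul (hasDerivAt_sin_const_mul l θ)) |>.congr_deriv
    (by linear_combination cos (l * θ) * hode)

lemma hasDerivAt_oscSin {θ : ℝ} (hu : DifferentiableAt ℝ u θ)
    (hu' : DifferentiableAt ℝ (deriv u) θ) (hode : deriv (deriv u) θ + l ^ 2 * u θ = 0) :
    HasDerivAt (oscSin l u) 0 θ :=
  (hu'.hasDerivAt.mul (hasDerivAt_sin_const_mul l θ)).sub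
    ((hu.hasDerivAt.const_mul l).mul (hasDerivAt_cos_const_mul l θ)) |>.congr_deriv
    (by linear_combination sin (l * θ) * hode)

lemma deriv_eq_cos_mul_oscCos_add_sin_mul_oscSin (t : ℝ) :
    deriv u t = cos (l * t) * oscCos l u t + sin (l * t) * oscSin l u t := by
  unfold oscCos oscSin
  linear_combination (-deriv u t) * sin_sq_add_cos_sq (l * t)

theorem eqOn_Icc_zero_of_dirichlet_neumann {ω : ℝ} (hl : cos (l * ω) ≠ 0)
    (hu : ContDiff ℝ 2 u) (hode : ∀ θ ∈ Icc 0 ω, deriv (deriv u) θ + l ^ 2 * u θ = 0)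
    (h0 : u 0 = 0) (hN : deriv u ω = 0) :
    ∀ θ ∈ Icc 0 ω, u θ = 0 := by
  intro θ hθ
  have hd : Differentiable ℝ u := hu.differentiable (by norm_num)
  have hd' : Differentiable ℝ (deriv u) := hu.differentiable_deriv_two
  have hC := eqOn_Icc_of_hasDerivAt_zero fun x hx => hasDerivAt_oscCos (hd x) (hd' x) (hode x hx)
  have hS := eqOn_Icc_of_hasDerivAt_zero fun x hx => hasDerivAt_oscSin (hd x) (hd' x) (hode x hx)
  have hωmem : ω ∈ Icc 0 ω := ⟨hθ.1.trans hθ.2, le_rfl⟩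
  have hS0 : oscSin l u 0 = 0 := by simp [oscSin, h0]
  have hluω : l * u ω = 0 := by
    have h := hS ω hωmem
    rw [hS0, oscSin, hN] at h
    exact (mul_eq_zero.mp (by linear_combination -h)).resolve_right hl
  have hC0 : oscCos l u 0 = 0 := by
    rw [← hC ω hωmem, oscCos, hN]
    linear_combination sin (l * ω) * hluω
  have hderiv : ∀ x ∈ Icc 0 ω, HasDerivAt u 0 x := fun x hx => by
    have := (hd x).hasDerivAt
    rwa [deriv_eq_cos_mul_oscCos_add_sin_mul_oscSin, hC x hx, hS x hx, hC0, hS0,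
      mul_zero, mul_zero, add_zero] at this
  rw [eqOn_Icc_of_hasDerivAt_zero hderiv θ hθ, h0]

end Oscillator

theorem cascade_profiles_vanish_general (ω : ℝ) (Q : ℕ) (l : ℂ)
    (hl : Complex.cos (l * (ω : ℂ)) ≠ 0)
    (v : ℕ → ℝ → ℂ)
    (hreg : ∀ q ≤ Q, ContDiff ℝ 2 (v q))
    (htop1 : v (Q + 1) = 0) (htop2 : v (Q + 2) = 0)
    (hode : ∀ q ≤ Q, ∀ θ ∈ Icc (0:ℝ) ω,
      deriv (deriv (v q)) θ + l ^ 2 * v q θ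
        + 2 * l * ((q : ℂ) + 1) * v (q + 1) θ
        + ((q : ℂ) + 2) * ((q : ℂ) + 1) * v (q + 2) θ = 0)
    (hbc : ∀ q ≤ Q, v q 0 = 0 ∧ deriv (v q) ω = 0) :
    ∀ q ≤ Q, ∀ θ ∈ Icc (0:ℝ) ω, v q θ = 0 := by
  have step : ∀ q < Q + 1, (∀ θ ∈ Icc (0:ℝ) ω, v (q + 1) θ = 0) →
      (∀ θ ∈ Icc (0:ℝ) ω, v (q + 2) θ = 0) → ∀ θ ∈ Icc (0:ℝ) ω, v q θ = 0 := by
    intro q hq h1 h2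
    refine eqOn_Icc_zero_of_dirichlet_neumann hl (hreg q (by omega)) (fun θ hθ => ?_)
      (hbc q (by omega)).1 (hbc q (by omega)).2
    simpa [h1 θ hθ, h2 θ hθ] using hode q (by omega) θ hθ
  intro q hq
  exact Nat.decreasingInduction_two (P := fun q => ∀ θ ∈ Icc (0:ℝ) ω, v q θ = 0) step
    (by simp [htop1]) (by simp [htop2]) q (by omega)

/-- The cascade of ODEs for the angular profiles of a separated singular function
`Σ_q r^λ (log r)^q v_q(θ)` in the kernel of the sector Laplacian with Dirichlet condition
at `θ = 0` and Neumann condition at `θ = ω`: if `cos (λ ω) ≠ 0`, all profiles vanish. -/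
theorem cascade_profiles_vanish (ω : ℝ) (hω : 0 < ω) (Q : ℕ) (l : ℂ)
    (hl : Complex.cos (l * (ω : ℂ)) ≠ 0)
    (v : ℕ → ℝ → ℂ)
    (hreg : ∀ q ≤ Q, ContDiff ℝ 2 (v q))
    (htop1 : v (Q + 1) = 0) (htop2 : v (Q + 2) = 0)
    (hode : ∀ q ≤ Q, ∀ θ ∈ Icc (0:ℝ) ω,
      deriv (deriv (v q)) θ + l ^ 2 * v q θ
        + 2 * l * ((q : ℂ) + 1) * v (q + 1) θ
        + ((q : ℂ) + 2) * ((q : ℂ) + 1) * v (q + 2) θ = 0)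
    (hbc : ∀ q ≤ Q, v q 0 = 0 ∧ deriv (v q) ω = 0) :
    ∀ q ≤ Q, ∀ θ ∈ Icc (0:ℝ) ω, v q θ = 0 :=
  cascade_profiles_vanish_general ω Q l hl v hreg htop1 htop2 hode hbc
end

section
/- Let n ≥ 1, let g ∈ ℝ, and let U ⊆ ℝ × ℝⁿ be open. Let v : ℝ × ℝⁿ → ℝⁿ and p : ℝ × ℝⁿ → ℝ be three times continuously differentiable, and suppose that at every point of U the Euler equations hold, ∂_t v_k + Σ_j v_j ∂_j v_k = −∂_k p − g·δ_{kn} for every 1 ≤ k ≤ n, together with Σ_j ∂_j v_j = 0 on U. Then at every point of U: ∂_t (Δp) + Σ_j v_j ∂_j (Δp) = 2 Σ_{i,j} ∂_i ∂_j p · ∂_j v_i + 2 Σ_{i,j,k} ∂_i v_j · ∂_j v_k · ∂_k v_i. -/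
/-!
Write `D_t = ∂_t + v·∇` and `A_{jk} = ∂_j v_k`. Differentiating the Euler equation in `x_j` and
commuting `∂_j` past `D_t` gives the Riccati equation `D_t A = -D²p - A²` on `U`, whose trace, by
incompressibility, is the Poisson equation `Δp = -tr(A²)`. Since `D_t` is a derivation,
`D_t Δp = -2 tr(A · D_t A) = 2 tr(D²p · A) + 2 tr(A³)`.
-/

open Set

/-- Time partial derivative of a function on `ℝ × ℝⁿ`. -/
noncomputable def pdt {n : ℕ} (f : ℝ × (Fin n → ℝ) → ℝ) (q : ℝ × (Fin n → ℝ)) : ℝ :=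
  fderiv ℝ f q (1, 0)

/-- Spatial partial derivative in the `i`-th coordinate of a function on `ℝ × ℝⁿ`. -/
noncomputable def pdx {n : ℕ} (i : Fin n) (f : ℝ × (Fin n → ℝ) → ℝ)
    (q : ℝ × (Fin n → ℝ)) : ℝ :=
  fderiv ℝ f q (0, Pi.single i 1)

section FDeriv

variable {E F : Type*} [NormedAddCommGroup E] [NormedSpace ℝ E]
  [NormedAddCommGroup F] [NormedSpace ℝ F] {f : E → F} {x : E}

theorem fderiv_fderiv_apply_const (hf : DifferentiableAt ℝ (fderiv ℝ f) x) (u w : E) :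
    fderiv ℝ (fun y => fderiv ℝ f y u) x w = fderiv ℝ (fderiv ℝ f) x w u := by
  rw [fderiv_clm_apply hf (differentiableAt_const u)]
  simp

theorem fderiv_fderiv_apply_field {W : E → E} (hf : ContDiffAt ℝ 2 f x)
    (hW : DifferentiableAt ℝ W x) (u : E) :
    fderiv ℝ (fun y => fderiv ℝ f y (W y)) x u
      = fderiv ℝ (fun y => fderiv ℝ f y u) x (W x) + fderiv ℝ f x (fderiv ℝ W x u) := by
  have hf' : DifferentiableAt ℝ (fderiv ℝ f) x :=
    (hf.fderiv_right (m := 1) le_rfl).differentiableAt one_ne_zero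
  rw [fderiv_clm_apply hf' hW, fderiv_fderiv_apply_const hf']
  simp [hf.isSymmSndFDerivAt (by simp) u (W x), add_comm]

end FDeriv

section Coordinates

variable {n : ℕ} {f h : ℝ × (Fin n → ℝ) → ℝ} {q : ℝ × (Fin n → ℝ)}

theorem fderiv_apply_eq_pdt_add_sum_pdx (f : ℝ × (Fin n → ℝ) → ℝ) (q : ℝ × (Fin n → ℝ))
    (s : ℝ) (w : Fin n → ℝ) :
    fderiv ℝ f q (s, w) = s * pdt f q + ∑ m, w m * pdx m f q := by
  have hsw : (s, w) = s • ((1 : ℝ), (0 : Fin n → ℝ))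
      + ∑ m, w m • ((0 : ℝ), Pi.single m (1 : ℝ)) := by
    ext i
    · simp [Prod.fst_sum]
    · simp [Prod.snd_sum, Finset.sum_apply, Pi.single_apply]
  simp only [hsw, map_add, map_sum, map_smul, smul_eq_mul, pdt, pdx]

theorem ContDiff.pdx {m k : WithTop ℕ∞} (hf : ContDiff ℝ k f) (hmk : m + 1 ≤ k) (i : Fin n) :
    ContDiff ℝ m (pdx i f) :=
  (hf.fderiv_right hmk).clm_apply contDiff_const

theorem pdx_congr {U : Set (ℝ × (Fin n → ℝ))} (hU : IsOpen U) (hfh : EqOn f h U) (hq : q ∈ U)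
    (i : Fin n) : pdx i f q = pdx i h q := by
  rw [pdx, pdx, (Filter.eventuallyEq_of_mem (hU.mem_nhds hq) hfh).fderiv_eq]

theorem pdx_neg_sub_const (c : ℝ) (i : Fin n) : pdx i (fun r => -f r - c) q = -pdx i f q := by
  simp [pdx, fderiv_sub_const, fderiv_fun_neg]

noncomputable def materialDeriv (v : ℝ × (Fin n → ℝ) → Fin n → ℝ) (f : ℝ × (Fin n → ℝ) → ℝ)
    (q : ℝ × (Fin n → ℝ)) : ℝ :=
  pdt f q + ∑ j, v q j * pdx j f q

variable {v : ℝ × (Fin n → ℝ) → Fin n → ℝ}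

theorem materialDeriv_eq_fderiv (v : ℝ × (Fin n → ℝ) → Fin n → ℝ) (f : ℝ × (Fin n → ℝ) → ℝ)
    (q : ℝ × (Fin n → ℝ)) : materialDeriv v f q = fderiv ℝ f q (1, v q) := by
  rw [fderiv_apply_eq_pdt_add_sum_pdx, one_mul, materialDeriv]

theorem materialDeriv_congr {U : Set (ℝ × (Fin n → ℝ))} (hU : IsOpen U) (hfh : EqOn f h U)
    (hq : q ∈ U) : materialDeriv v f q = materialDeriv v h q := by
  rw [materialDeriv_eq_fderiv, materialDeriv_eq_fderiv,
    (Filter.eventuallyEq_of_mem (hU.mem_nhds hq) hfh).fderiv_eq]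

theorem materialDeriv_const (c : ℝ) : materialDeriv v (fun _ => c) q = 0 := by
  simp [materialDeriv_eq_fderiv]

theorem materialDeriv_neg : materialDeriv v (fun r => -f r) q = -materialDeriv v f q := by
  simp [materialDeriv_eq_fderiv, fderiv_fun_neg]

theorem materialDeriv_mul (hf : DifferentiableAt ℝ f q) (hh : DifferentiableAt ℝ h q) :
    materialDeriv v (fun r => f r * h r) q
      = materialDeriv v f q * h q + f q * materialDeriv v h q := by
  simp only [materialDeriv_eq_fderiv, fderiv_fun_mul hf hh, add_apply,
    smul_apply, smul_eq_mul]
  ring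

theorem materialDeriv_sum {ι : Type*} (s : Finset ι) {F : ι → ℝ × (Fin n → ℝ) → ℝ}
    (hF : ∀ i ∈ s, DifferentiableAt ℝ (F i) q) :
    materialDeriv v (fun r => ∑ i ∈ s, F i r) q = ∑ i ∈ s, materialDeriv v (F i) q := by
  simp [materialDeriv_eq_fderiv, fderiv_fun_sum hF]

theorem materialDeriv_sum_sum_mul {ι : Type*} [Fintype ι] {a : ι → ι → ℝ × (Fin n → ℝ) → ℝ}
    (ha : ∀ j k, DifferentiableAt ℝ (a j k) q) :
    materialDeriv v (fun r => ∑ j, ∑ k, a j k r * a k j r) q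
      = ∑ j, ∑ k, (materialDeriv v (a j k) q * a k j q + a j k q * materialDeriv v (a k j) q) := by
  rw [materialDeriv_sum _ (F := fun j r => ∑ k, a j k r * a k j r)
    fun j _ => DifferentiableAt.fun_sum fun k _ => (ha j k).mul (ha k j)]
  refine Finset.sum_congr rfl fun j _ => ?_
  rw [materialDeriv_sum _ (F := fun k r => a j k r * a k j r) fun k _ => (ha j k).mul (ha k j)]
  exact Finset.sum_congr rfl fun k _ => materialDeriv_mul (ha j k) (ha k j)

theorem pdx_materialDeriv (hv : DifferentiableAt ℝ v q) (hf : ContDiffAt ℝ 2 f q) (j : Fin n) :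
    pdx j (materialDeriv v f) q
      = materialDeriv v (pdx j f) q + ∑ m, pdx j (fun r => v r m) q * pdx m f q := by
  have hW : HasFDerivAt (fun r => ((1 : ℝ), v r)) ((0 : _ →L[ℝ] ℝ).prod (fderiv ℝ v q)) q :=
    (hasFDerivAt_const _ q).prodMk hv.hasFDerivAt
  rw [pdx, funext (materialDeriv_eq_fderiv v f),
    fderiv_fderiv_apply_field hf hW.differentiableAt, hW.fderiv, materialDeriv_eq_fderiv]
  congr 1
  rw [ContinuousLinearMap.prod_apply, zero_apply, fderiv_apply_eq_pdt_add_sum_pdx,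
    fderiv_pi (differentiableAt_pi.1 hv)]
  simp [pdx]

end Coordinates

/-- With `d = D_t A` and `h = D²p`: `-D_t tr(A²) = 2 tr(hA) + 2 tr(A³)`. -/
theorem neg_sum_leibniz_trace_sq_of_riccati {n : ℕ} (a d h : Fin n → Fin n → ℝ)
    (hd : ∀ j k, d j k = -h j k - ∑ m, a j m * a m k) :
    -∑ j, ∑ k, (d j k * a k j + a j k * d k j)
      = 2 * ∑ i, ∑ j, h i j * a j i + 2 * ∑ i, ∑ j, ∑ k, a i j * a j k * a k i := by
  have hsymm : ∑ j, ∑ k, a j k * d k j = ∑ j, ∑ k, d j k * a k j := by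
    rw [Finset.sum_comm]
    simp only [mul_comm]
  have hcube : ∑ j, ∑ k, (∑ m, a j m * a m k) * a k j
      = ∑ i, ∑ j, ∑ k, a i j * a j k * a k i := by
    simp only [Finset.sum_mul]
    exact Finset.sum_congr rfl fun i _ => Finset.sum_comm
  simp only [Finset.sum_add_distrib]
  rw [hsymm]
  simp only [hd, sub_mul, neg_mul, Finset.sum_sub_distrib, Finset.sum_neg_distrib, hcube]
  ring

section Euler

variable {n : ℕ} {U : Set (ℝ × (Fin n → ℝ))} {v : ℝ × (Fin n → ℝ) → Fin n → ℝ}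
  {p : ℝ × (Fin n → ℝ) → ℝ} {C : Fin n → ℝ}

theorem differentiable_pdx_velocity (hv : ContDiff ℝ 2 v) (j k : Fin n) :
    Differentiable ℝ (pdx j fun r => v r k) :=
  ((contDiff_pi.1 hv k).pdx (m := 1) (by norm_num) j).differentiable one_ne_zero

theorem materialDeriv_pdx_velocity (hU : IsOpen U) (hv : ContDiff ℝ 2 v)
    (heuler : ∀ q ∈ U, ∀ k, materialDeriv v (fun r => v r k) q = -pdx k p q - C k)
    {q : ℝ × (Fin n → ℝ)} (hq : q ∈ U) (j k : Fin n) :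
    materialDeriv v (pdx j fun r => v r k) q
      = -pdx j (pdx k p) q - ∑ m, pdx j (fun r => v r m) q * pdx m (fun r => v r k) q := by
  have hcomm := pdx_materialDeriv (hv.differentiable two_ne_zero q)
    (contDiff_pi.1 hv k).contDiffAt j
  rw [pdx_congr hU (fun r hr => heuler r hr k) hq, pdx_neg_sub_const] at hcomm
  linarith

theorem laplacian_pressure_eq (hU : IsOpen U) (hv : ContDiff ℝ 2 v)
    (heuler : ∀ q ∈ U, ∀ k, materialDeriv v (fun r => v r k) q = -pdx k p q - C k)
    (hdiv : ∀ q ∈ U, ∑ j, pdx j (fun r => v r j) q = 0) {q : ℝ × (Fin n → ℝ)} (hq : q ∈ U) :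
    ∑ i, pdx i (pdx i p) q
      = -∑ j, ∑ k, pdx j (fun r => v r k) q * pdx k (fun r => v r j) q := by
  have hDdiv : materialDeriv v (fun r => ∑ k, pdx k (fun s => v s k) r) q = 0 := by
    rw [materialDeriv_congr hU hdiv hq, materialDeriv_const]
  rw [materialDeriv_sum _ fun k _ => differentiable_pdx_velocity hv k k q] at hDdiv
  simp only [materialDeriv_pdx_velocity hU hv heuler hq, Finset.sum_sub_distrib,
    Finset.sum_neg_distrib] at hDdiv
  linarith

end Euler

theorem material_derivative_pressure_laplacian_general {n : ℕ} (g : ℝ)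
    (U : Set (ℝ × (Fin n → ℝ))) (hU : IsOpen U)
    (v : ℝ × (Fin n → ℝ) → Fin n → ℝ) (p : ℝ × (Fin n → ℝ) → ℝ)
    (hv : ContDiff ℝ 3 v)
    (heuler : ∀ q ∈ U, ∀ k : Fin n,
      pdt (fun r => v r k) q + ∑ j, v q j * pdx j (fun r => v r k) q
        = -pdx k p q - (if (k : ℕ) = n - 1 then g else 0))
    (hdiv : ∀ q ∈ U, ∑ j, pdx j (fun r => v r j) q = 0) :
    ∀ q ∈ U,
      pdt (fun r => ∑ i, pdx i (pdx i p) r) q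
        + ∑ j, v q j * pdx j (fun r => ∑ i, pdx i (pdx i p) r) q
      = 2 * ∑ i, ∑ j, pdx i (pdx j p) q * pdx j (fun r => v r i) q
        + 2 * ∑ i, ∑ j, ∑ k, pdx i (fun r => v r j) q * pdx j (fun r => v r k) q
            * pdx k (fun r => v r i) q := by
  intro q hq
  have hv2 : ContDiff ℝ 2 v := hv.of_le (by norm_num)
  have hA := differentiable_pdx_velocity hv2
  calc materialDeriv v (fun r => ∑ i, pdx i (pdx i p) r) q
      = materialDeriv v (fun r => -∑ j, ∑ k,
          pdx j (fun s => v s k) r * pdx k (fun s => v s j) r) q :=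
        materialDeriv_congr hU (fun r hr => laplacian_pressure_eq hU hv2 heuler hdiv hr) hq
    _ = -∑ j, ∑ k, (materialDeriv v (pdx j fun s => v s k) q * pdx k (fun s => v s j) q
          + pdx j (fun s => v s k) q * materialDeriv v (pdx k fun s => v s j) q) := by
        rw [materialDeriv_neg, materialDeriv_sum_sum_mul fun j k => hA j k q]
    _ = _ := neg_sum_leibniz_trace_sq_of_riccati _ _ _
        (materialDeriv_pdx_velocity hU hv2 heuler hq)

/-- Material derivative of the pressure Laplacian of an incompressible Euler flow:
`D_t Δp = 2 tr(D²p · Dv) + 2 tr((Dv)³)`. -/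
theorem material_derivative_pressure_laplacian {n : ℕ} (hn : 1 ≤ n) (g : ℝ)
    (U : Set (ℝ × (Fin n → ℝ))) (hU : IsOpen U)
    (v : ℝ × (Fin n → ℝ) → Fin n → ℝ) (p : ℝ × (Fin n → ℝ) → ℝ)
    (hv : ContDiff ℝ 3 v) (hp : ContDiff ℝ 3 p)
    (heuler : ∀ q ∈ U, ∀ k : Fin n,
      pdt (fun r => v r k) q + ∑ j, v q j * pdx j (fun r => v r k) q
        = -pdx k p q - (if (k : ℕ) = n - 1 then g else 0))
    (hdiv : ∀ q ∈ U, ∑ j, pdx j (fun r => v r j) q = 0) :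
    ∀ q ∈ U,
      pdt (fun r => ∑ i, pdx i (pdx i p) r) q
        + ∑ j, v q j * pdx j (fun r => ∑ i, pdx i (pdx i p) r) q
      = 2 * ∑ i, ∑ j, pdx i (pdx j p) q * pdx j (fun r => v r i) q
        + 2 * ∑ i, ∑ j, ∑ k, pdx i (fun r => v r j) q * pdx j (fun r => v r k) q
            * pdx k (fun r => v r i) q :=
  material_derivative_pressure_laplacian_general g U hU v p hv heuler hdiv
end
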